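/- The function f(u) = (1/2)/((u+1)·log(u+1) − (u+1)·log u − 1) − u is strictly increasing on (0, ∞). -/

import Mathlib

/-!
Write `L = log (u + 1) - log u`, so that the denominator is `g = (u + 1) L - 1 > 0`,
`g' = L - 1 / u`, and `f' > 0` amounts to `2 g ^ 2 < 1 / u - L`. Substituting
`u = 1 / (exp L - 1)` turns this into the positivity, for `L > 0`, of the exponential polynomial
`e^{3L} + (-2L² + 3L - 5) e^{2L} + (7 - 2L) e^L - L - 3`. That function vanishes to order six
at `0`, and its sixth derivative is positive on `(0, ∞)` by `e^t ≥ 1 + t` and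
`e^t ≥ (1 + t/3)³`.
-/

open Real

noncomputable def expQuad (α a b c d e p q t : ℝ) : ℝ :=
  α * exp t ^ 3 + (a * t ^ 2 + b * t + c) * exp t ^ 2 + (d * t + e) * exp t + (p * t + q)

lemma hasDerivAt_expQuad (α a b c d e p q t : ℝ) :
    HasDerivAt (expQuad α a b c d e p q)
      (expQuad (3 * α) (2 * a) (2 * a + 2 * b) (b + 2 * c) d (d + e) 0 p t) t := by
  have hexp := hasDerivAt_exp t
  have hid := hasDerivAt_id' t
  have h := ((((hexp.fun_pow 3).const_mul α).fun_add
    ((((hid.fun_pow 2).const_mul a).fun_add (hid.const_mul b)).add_const c |>.fun_mul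
      (hexp.fun_pow 2))).fun_add (((hid.const_mul d).add_const e).fun_mul hexp)).fun_add
    ((hid.const_mul p).add_const q)
  exact h.congr_deriv (by simp only [expQuad]; push_cast; ring)

lemma pos_of_hasDerivAt_pos {f f' : ℝ → ℝ} (h0 : f 0 = 0)
    (hf : ∀ t, 0 ≤ t → HasDerivAt f (f' t) t) (hf' : ∀ t, 0 < t → 0 < f' t) {t : ℝ}
    (ht : 0 < t) : 0 < f t := by
  have hmono : StrictMonoOn f (Set.Ici 0) := by
    refine strictMonoOn_of_deriv_pos (convex_Ici 0)
      (fun x hx => (hf x hx).continuousAt.continuousWithinAt) fun x hx => ?_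
    rw [interior_Ici] at hx
    rw [(hf x hx.le).deriv]
    exact hf' x hx
  simpa [h0] using hmono Set.self_mem_Ici ht.le ht

lemma expQuad_pos_of_deriv_pos {α a b c d e p q : ℝ} (h0 : α + c + e + q = 0)
    (h : ∀ t, 0 < t →
      0 < expQuad (3 * α) (2 * a) (2 * a + 2 * b) (b + 2 * c) d (d + e) 0 p t) :
    ∀ t, 0 < t → 0 < expQuad α a b c d e p q t :=
  fun _ => pos_of_hasDerivAt_pos (by simp [expQuad]; linarith) (fun t _ => hasDerivAt_expQuad ..) h

lemma expQuad_sixth_pos {t : ℝ} (ht : 0 < t) :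
    0 < expQuad 729 (-128) (-576) (-704) (-2) (-5) 0 0 t := by
  have hy : 1 + t ≤ exp t := by linarith [add_one_le_exp t]
  have hy3 : (1 + t / 3) ^ 3 ≤ exp t := by
    calc (1 + t / 3) ^ 3 ≤ exp (t / 3) ^ 3 := by
          gcongr
          linarith [add_one_le_exp (t / 3)]
      _ = exp t := by rw [← exp_nat_mul]; ring_nf
  have hpos := exp_pos t
  -- `729 (1 + t/3)³ = (128 t² + 576 t + 704) + (27 t³ + 115 t² + 153 t + 25)`
  have hlin : 128 * t ^ 2 + 576 * t + 704 + (27 * t ^ 3 + 115 * t ^ 2 + 153 * t + 25)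
      ≤ 729 * exp t := by nlinarith
  simp only [expQuad]
  nlinarith [mul_le_mul_of_nonneg_right hlin (mul_nonneg hpos.le hpos.le),
    mul_le_mul_of_nonneg_left hy hpos.le, mul_pos (mul_pos hpos hpos) ht, mul_pos hpos ht]

lemma expQuad_pos : ∀ t, 0 < t → 0 < expQuad 1 (-2) 3 (-5) (-2) 7 (-1) (-3) t := by
  iterate 6
    refine expQuad_pos_of_deriv_pos ?_ ?_
    · norm_num
  norm_num
  exact fun t ht => expQuad_sixth_pos ht

section

variable {u : ℝ}

lemma exp_log_succ_sub_log (hu : 0 < u) : exp (log (u + 1) - log u) = (u + 1) / u := by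
  rw [exp_sub, exp_log (by linarith), exp_log hu]

lemma succ_mul_log_succ_sub_log_sub_one_pos (hu : 0 < u) :
    0 < (u + 1) * log (u + 1) - (u + 1) * log u - 1 := by
  have hu1 : 0 < u + 1 := by linarith
  have h := log_lt_sub_one_of_pos (div_pos hu hu1) (div_lt_one hu1 |>.mpr (by linarith)).ne
  rw [log_div hu.ne' hu1.ne'] at h
  have hsub : u / (u + 1) - 1 = -1 / (u + 1) := by field_simp; ring
  rw [hsub, lt_div_iff₀ hu1] at h
  linarith

lemma two_mul_sq_lt_inv_sub_log_succ_sub_log (hu : 0 < u) :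
    2 * ((u + 1) * log (u + 1) - (u + 1) * log u - 1) ^ 2 < 1 / u - (log (u + 1) - log u) := by
  have hexp := exp_log_succ_sub_log hu
  rw [show (u + 1) * log (u + 1) - (u + 1) * log u = (u + 1) * (log (u + 1) - log u) by ring]
  set L := log (u + 1) - log u
  have hL : 0 < L := sub_pos.mpr (log_lt_log hu (by linarith))
  have hsubst : expQuad 1 (-2) 3 (-5) (-2) 7 (-1) (-3) L
      = (1 - u * L - 2 * u * ((u + 1) * L - 1) ^ 2) / u ^ 3 := by
    simp only [expQuad, hexp]
    field_simp
    ring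
  have h := expQuad_pos L hL
  rw [hsubst, div_pos_iff_of_pos_right (by positivity)] at h
  rw [lt_sub_iff_add_lt, lt_div_iff₀ hu]
  linarith

lemma hasDerivAt_succ_mul_log_succ_sub_log (hu : 0 < u) :
    HasDerivAt (fun u => (u + 1) * log (u + 1) - (u + 1) * log u - 1)
      (log (u + 1) - log u - 1 / u) u := by
  have hu1 : u + 1 ≠ 0 := by linarith
  have hid := hasDerivAt_id' u
  have h := (((hid.add_const 1).fun_mul ((hid.add_const 1).log hu1)).fun_sub
    ((hid.add_const 1).fun_mul (hasDerivAt_log hu.ne'))).sub_const 1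
  exact h.congr_deriv (by field_simp; ring)

end

theorem stmt_4 :
    StrictMonoOn (fun u : ℝ =>
      (1/2) / ((u + 1) * Real.log (u + 1) - (u + 1) * Real.log u - 1) - u)
      (Set.Ioi 0) := by
  have hf : ∀ u : ℝ, 0 < u → HasDerivAt (fun u : ℝ =>
      (1/2) / ((u + 1) * Real.log (u + 1) - (u + 1) * Real.log u - 1) - u)
      ((1 / u - (log (u + 1) - log u)) / (2 * ((u + 1) * log (u + 1) - (u + 1) * log u - 1) ^ 2)
        - 1) u := fun u hu =>
    ((hasDerivAt_const u (1 / 2 : ℝ)).div (hasDerivAt_succ_mul_log_succ_sub_log hu)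
      (succ_mul_log_succ_sub_log_sub_one_pos hu).ne' |>.sub (hasDerivAt_id' u)).congr_deriv
      (by field_simp; ring)
  refine strictMonoOn_of_deriv_pos (convex_Ioi 0)
    (fun u hu => (hf u hu).continuousAt.continuousWithinAt) fun u hu => ?_
  rw [interior_Ioi] at hu
  have hg := succ_mul_log_succ_sub_log_sub_one_pos hu
  rw [(hf u hu).deriv, sub_pos, one_lt_div (by positivity)]
  exact two_mul_sq_lt_inv_sub_log_succ_sub_log hu
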